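/- Let f ∈ L²([0,1]^D) with variance σ²(f) > 0, and let X = (x_1,…,x_n) consist of n independent points uniform on [0,1]^D, with F(X) = (1/n) ∑_{i=1}^n f(x_i). Then Var(F(X)) = σ²(f)/n, and the column-wise mean dimension of F equals the mean dimension of f: ∑_{k=1}^D [ (1/2) E( (F(X) − F(X̃_k))² ) ] / Var(F(X)) = ∑_{k=1}^D [ (1/2) E( (f(x) − f(x_{−k}:z_k))² ) ] / σ²(f), where X̃_k replaces the k-th coordinate of every row of X by independent uniform values, x is uniform on [0,1]^D, and x_{−k}:z_k replaces coordinate k of x by an independent uniform z_k. In the paper's notation, ν_MC(F) = ν_MC(f): under plain Monte Carlo, the column-wise mean dimension of the estimator coincides with the mean dimension of the integrand. -/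

import Mathlib

open MeasureTheory

/-- The uniform probability measure on the cube `[0,1]^D`. -/
noncomputable def cubeMeasure (D : ℕ) : Measure (Fin D → ℝ) :=
  Measure.pi fun _ => volume.restrict (Set.Icc (0 : ℝ) 1)

/-- The distribution of `n` i.i.d. points uniform on `[0,1]^D`. -/
noncomputable def ensembleMeasure (n D : ℕ) : Measure (Fin n → Fin D → ℝ) :=
  Measure.pi fun _ => cubeMeasure D

/-!
The sample mean of `n` i.i.d. copies of an `L²` variable has the same mean and `1/n` times its
variance. Resampling column `k` of the ensemble changes `F(X)` by the sample mean of the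
i.i.d. variables `f(xᵢ) - f(xᵢ with coordinate k replaced by zᵢ)` on `[0,1]^D × [0,1]`; these are
centred because the replacement preserves the uniform measure, so the same fact shows that
every column-wise Jansen index of `F` is `1/n` times the corresponding index of `f`. The factors
`1/n` cancel in the ratio.
-/

open MeasureTheory ProbabilityTheory Function Set

instance isProbabilityMeasure_volume_restrict_unitInterval :
    IsProbabilityMeasure (volume.restrict (Icc (0 : ℝ) 1)) :=
  ⟨by simp [Real.volume_Icc]⟩

instance isProbabilityMeasure_cubeMeasure (D : ℕ) : IsProbabilityMeasure (cubeMeasure D) := by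
  unfold cubeMeasure; infer_instance

theorem MeasureTheory.MeasurePreserving.integral_comp_of_aestronglyMeasurable
    {α β : Type*} [MeasurableSpace α] [MeasurableSpace β] {μ : Measure α} {ν : Measure β}
    {E : Type*} [NormedAddCommGroup E] [NormedSpace ℝ E]
    {T : α → β} (hT : MeasurePreserving T μ ν) {g : β → E} (hg : AEStronglyMeasurable g ν) :
    ∫ x, g (T x) ∂μ = ∫ y, g y ∂ν := by
  rw [← hT.map_eq] at hg
  rw [← integral_map hT.measurable.aemeasurable hg, hT.map_eq]

theorem measurePreserving_update {ι : Type*} [Fintype ι] [DecidableEq ι] {α : ι → Type*}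
    [∀ i, MeasurableSpace (α i)] (μ : ∀ i, Measure (α i)) [∀ i, IsProbabilityMeasure (μ i)]
    (k : ι) :
    MeasurePreserving (fun p : (∀ i, α i) × α k => update p.1 k p.2)
      ((Measure.pi μ).prod (μ k)) (Measure.pi μ) := by
  refine ⟨measurable_update', (Measure.pi_eq fun s hs => ?_).symm⟩
  have hpre : (fun p : (∀ i, α i) × α k => update p.1 k p.2) ⁻¹' univ.pi s
      = univ.pi (update s k univ) ×ˢ s k := by
    ext ⟨x, z⟩
    simp only [mem_preimage, mem_pi, mem_univ, true_implies, mem_prod]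
    refine ⟨fun h => ⟨fun j => ?_, by simpa using h k⟩, fun ⟨hx, hz⟩ j => ?_⟩
    · rcases eq_or_ne j k with rfl | hjk
      · simp
      · simpa [hjk] using h j
    · rcases eq_or_ne j k with rfl | hjk
      · simpa using hz
      · simpa [hjk] using hx j
  rw [Measure.map_apply measurable_update' (.univ_pi hs), hpre, Measure.prod_prod,
    Measure.pi_pi, Fintype.prod_eq_mul_prod_compl k, Fintype.prod_eq_mul_prod_compl k]
  simp only [update_self, measure_univ, one_mul]
  rw [mul_comm]
  congr 1
  exact Finset.prod_congr rfl fun j hj => by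
    rw [update_of_ne (by simpa using hj)]

section SampleMean

variable {α : Type*} [MeasurableSpace α] {κ : Measure α} [IsProbabilityMeasure κ]
  {h : α → ℝ} {n : ℕ}

theorem MeasureTheory.MemLp.sampleMean {p : ENNReal} (hh : MemLp h p κ) :
    MemLp (fun w : Fin n → α => (1 / (n : ℝ)) * ∑ i, h (w i))
      p (Measure.pi fun _ => κ) :=
  (memLp_finsetSum _ fun i _ => hh.comp_measurePreserving (measurePreserving_eval _ i)).const_mul _

theorem integral_sampleMean (hh : Integrable h κ) (hn : n ≠ 0) :
    ∫ w : Fin n → α, (1 / (n : ℝ)) * ∑ i, h (w i) ∂Measure.pi (fun _ => κ)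
      = ∫ x, h x ∂κ := by
  rw [integral_const_mul, integral_finsetSum _ fun i _ => integrable_comp_eval hh]
  simp_rw [integral_comp_eval (μ := fun _ => κ) hh.aestronglyMeasurable]
  simp only [one_div, Finset.sum_const, Finset.card_univ, Fintype.card_fin, nsmul_eq_mul]
  field_simp

theorem integral_sq_sampleMean_sub (hh : MemLp h 2 κ) (hn : n ≠ 0) :
    ∫ w : Fin n → α, ((1 / (n : ℝ)) * ∑ i, h (w i) - ∫ x, h x ∂κ) ^ 2
        ∂Measure.pi (fun _ => κ)
      = (∫ x, (h x - ∫ y, h y ∂κ) ^ 2 ∂κ) / n := by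
  have hS : (fun w : Fin n → α => (1 / (n : ℝ)) * ∑ i, h (w i))
      = (1 / (n : ℝ)) • ∑ i : Fin n, fun w : Fin n → α => h (w i) := by
    ext; simp [Finset.sum_apply]
  calc _ = Var[fun w : Fin n → α => (1 / (n : ℝ)) * ∑ i, h (w i); Measure.pi fun _ => κ] := by
        rw [variance_eq_integral hh.sampleMean.aemeasurable,
          integral_sampleMean (hh.integrable one_le_two) hn]
    _ = (1 / (n : ℝ)) ^ 2 * ∑ _ : Fin n, Var[h; κ] := by
        rw [hS, variance_smul, variance_sum_pi fun _ => hh]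
    _ = _ := by
        rw [variance_eq_integral hh.aemeasurable]
        simp only [one_div, inv_pow, Finset.sum_const, Finset.card_univ, Fintype.card_fin,
          nsmul_eq_mul]
        field_simp

end SampleMean

theorem integral_integral_pi_eq_integral_pi_prod {ι α β : Type*} [Fintype ι]
    [MeasurableSpace α] [MeasurableSpace β] {μ : Measure α} {ν : Measure β}
    [SigmaFinite μ] [SigmaFinite ν] {E : Type*} [NormedAddCommGroup E] [NormedSpace ℝ E]
    {F : (ι → α × β) → E}
    (hF : Integrable F (Measure.pi fun _ => μ.prod ν)) :
    ∫ X, ∫ z, F (fun i => (X i, z i)) ∂Measure.pi (fun _ => ν) ∂Measure.pi (fun _ => μ)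
      = ∫ w, F w ∂Measure.pi (fun _ => μ.prod ν) := by
  have he := (measurePreserving_arrowProdEquivProdArrow α β ι (fun _ => μ) (fun _ => ν)).symm
  rw [← he.integral_comp' F]
  exact (integral_prod _ ((he.integrable_comp_emb (MeasurableEquiv.measurableEmbedding _)).2
    hF)).symm

theorem integral_sq_sampleMean_sub_resample {α β : Type*} [MeasurableSpace α]
    [MeasurableSpace β] {ρ : Measure α} [IsProbabilityMeasure ρ] {ν : Measure β}
    [IsProbabilityMeasure ν] {T : α × β → α} (hT : MeasurePreserving T (ρ.prod ν) ρ)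
    {f : α → ℝ} (hf : MemLp f 2 ρ) {n : ℕ} (hn : n ≠ 0) :
    ∫ X : Fin n → α, ∫ z : Fin n → β,
        ((1 / (n : ℝ)) * ∑ i, f (X i) - (1 / (n : ℝ)) * ∑ i, f (T (X i, z i))) ^ 2
        ∂Measure.pi (fun _ => ν) ∂Measure.pi (fun _ => ρ)
      = (∫ x, ∫ z, (f x - f (T (x, z))) ^ 2 ∂ν ∂ρ) / n := by
  set g : α × β → ℝ := fun p => f p.1 - f (T p)
  have hg : MemLp g 2 (ρ.prod ν) :=
    (hf.comp_measurePreserving measurePreserving_fst).sub (hf.comp_measurePreserving hT)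
  have hg_mean : ∫ p, g p ∂(ρ.prod ν) = 0 := by
    have hf_fst : Integrable (fun p : α × β => f p.1) (ρ.prod ν) :=
      (hf.comp_measurePreserving measurePreserving_fst).integrable one_le_two
    have hf_T : Integrable (fun p => f (T p)) (ρ.prod ν) :=
      (hf.comp_measurePreserving hT).integrable one_le_two
    rw [integral_sub hf_fst hf_T,
      measurePreserving_fst.integral_comp_of_aestronglyMeasurable hf.1,
      hT.integral_comp_of_aestronglyMeasurable hf.1, sub_self]
  calc _ = ∫ X : Fin n → α, ∫ z : Fin n → β, ((1 / (n : ℝ)) * ∑ i, g (X i, z i)) ^ 2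
        ∂Measure.pi (fun _ => ν) ∂Measure.pi (fun _ => ρ) := by
        simp only [g, Finset.sum_sub_distrib, mul_sub]
    _ = ∫ w : Fin n → α × β, ((1 / (n : ℝ)) * ∑ i, g (w i)) ^ 2
        ∂Measure.pi (fun _ => ρ.prod ν) :=
        integral_integral_pi_eq_integral_pi_prod hg.sampleMean.integrable_sq
    _ = (∫ p, g p ^ 2 ∂(ρ.prod ν)) / n := by
        simpa [hg_mean] using integral_sq_sampleMean_sub hg hn
    _ = _ := by rw [integral_prod _ hg.integrable_sq]

theorem stmt_7_general {D : ℕ} (f : (Fin D → ℝ) → ℝ) (hf : MemLp f 2 (cubeMeasure D))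
    (n : ℕ) (hn : 0 < n) :
    (∫ X : Fin n → Fin D → ℝ,
        ((1 / (n : ℝ)) * ∑ i, f (X i) -
          ∫ X' : Fin n → Fin D → ℝ, (1 / (n : ℝ)) * ∑ i, f (X' i)
            ∂ensembleMeasure n D) ^ 2 ∂ensembleMeasure n D
      = (∫ x, (f x - ∫ y, f y ∂cubeMeasure D) ^ 2 ∂cubeMeasure D) / n) ∧
    ((∑ k : Fin D, (1 / 2) *
          ∫ X : Fin n → Fin D → ℝ,
            (∫ z : Fin n → ℝ,
              ((1 / (n : ℝ)) * ∑ i, f (X i) -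
                (1 / (n : ℝ)) * ∑ i, f (Function.update (X i) k (z i))) ^ 2
              ∂(Measure.pi fun _ : Fin n => volume.restrict (Set.Icc (0 : ℝ) 1)))
            ∂ensembleMeasure n D) /
        (∫ X : Fin n → Fin D → ℝ,
          ((1 / (n : ℝ)) * ∑ i, f (X i) -
            ∫ X' : Fin n → Fin D → ℝ, (1 / (n : ℝ)) * ∑ i, f (X' i)
              ∂ensembleMeasure n D) ^ 2 ∂ensembleMeasure n D)
      = (∑ k : Fin D, (1 / 2) *
            ∫ x, (∫ z in Set.Icc (0 : ℝ) 1, (f x - f (Function.update x k z)) ^ 2)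
              ∂cubeMeasure D) /
          ∫ x, (f x - ∫ y, f y ∂cubeMeasure D) ^ 2 ∂cubeMeasure D) := by
  have hjansen : ∀ k : Fin D,
      ∫ X : Fin n → Fin D → ℝ, ∫ z : Fin n → ℝ,
          ((1 / (n : ℝ)) * ∑ i, f (X i) - (1 / (n : ℝ)) * ∑ i, f (update (X i) k (z i))) ^ 2
          ∂(Measure.pi fun _ : Fin n => volume.restrict (Icc (0 : ℝ) 1)) ∂ensembleMeasure n D
        = (∫ x, (∫ z in Icc (0 : ℝ) 1, (f x - f (update x k z)) ^ 2) ∂cubeMeasure D) / n :=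
    fun k => integral_sq_sampleMean_sub_resample (measurePreserving_update _ k) hf hn.ne'
  have hvar : ∫ X : Fin n → Fin D → ℝ,
        ((1 / (n : ℝ)) * ∑ i, f (X i) -
          ∫ X' : Fin n → Fin D → ℝ, (1 / (n : ℝ)) * ∑ i, f (X' i) ∂ensembleMeasure n D) ^ 2
          ∂ensembleMeasure n D
      = (∫ x, (f x - ∫ y, f y ∂cubeMeasure D) ^ 2 ∂cubeMeasure D) / n := by
    rw [ensembleMeasure, integral_sampleMean (hf.integrable one_le_two) hn.ne']
    exact integral_sq_sampleMean_sub hf hn.ne'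
  refine ⟨hvar, ?_⟩
  simp_rw [hvar, hjansen, mul_div_assoc', ← Finset.sum_div]
  exact div_div_div_cancel_right₀ (Nat.cast_ne_zero.2 hn.ne') _ _

/-- for `f ∈ L²([0,1]^D)` with `σ²(f) > 0` and the Monte Carlo
estimator `F(X) = (1/n)∑ᵢ f(xᵢ)` over `n` i.i.d. uniform points:
`Var(F(X)) = σ²(f)/n`, and the column-wise mean dimension of `F` (Jansen indices
of the `D` columns, normalized by `Var(F(X))`) equals the mean dimension of `f`
(Jansen indices of the `D` coordinates, normalized by `σ²(f)`):
`ν_MC(F) = ν_MC(f)`. -/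
theorem stmt_7 {D : ℕ} (f : (Fin D → ℝ) → ℝ) (hf : MemLp f 2 (cubeMeasure D))
    (hσ : 0 < ∫ x, (f x - ∫ y, f y ∂cubeMeasure D) ^ 2 ∂cubeMeasure D)
    (n : ℕ) (hn : 0 < n) :
    (∫ X : Fin n → Fin D → ℝ,
        ((1 / (n : ℝ)) * ∑ i, f (X i) -
          ∫ X' : Fin n → Fin D → ℝ, (1 / (n : ℝ)) * ∑ i, f (X' i)
            ∂ensembleMeasure n D) ^ 2 ∂ensembleMeasure n D
      = (∫ x, (f x - ∫ y, f y ∂cubeMeasure D) ^ 2 ∂cubeMeasure D) / n) ∧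
    ((∑ k : Fin D, (1 / 2) *
          ∫ X : Fin n → Fin D → ℝ,
            (∫ z : Fin n → ℝ,
              ((1 / (n : ℝ)) * ∑ i, f (X i) -
                (1 / (n : ℝ)) * ∑ i, f (Function.update (X i) k (z i))) ^ 2
              ∂(Measure.pi fun _ : Fin n => volume.restrict (Set.Icc (0 : ℝ) 1)))
            ∂ensembleMeasure n D) /
        (∫ X : Fin n → Fin D → ℝ,
          ((1 / (n : ℝ)) * ∑ i, f (X i) -
            ∫ X' : Fin n → Fin D → ℝ, (1 / (n : ℝ)) * ∑ i, f (X' i)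
              ∂ensembleMeasure n D) ^ 2 ∂ensembleMeasure n D)
      = (∑ k : Fin D, (1 / 2) *
            ∫ x, (∫ z in Set.Icc (0 : ℝ) 1, (f x - f (Function.update x k z)) ^ 2)
              ∂cubeMeasure D) /
          ∫ x, (f x - ∫ y, f y ∂cubeMeasure D) ^ 2 ∂cubeMeasure D) :=
  stmt_7_general f hf n hn
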